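/- The group G = ⟨X₁, X₂, X₃ : Xᵢ³ = e, XᵢXⱼXₖ = XₖXᵢXⱼ for pairwise distinct i,j,k⟩ is isomorphic to C₃ × ((C₃ × C₃) ⋊ C₃), where the semidirect product is the Heisenberg group over ℤ/3ℤ. -/
import Mathlib


open Matrix

/-- The Heisenberg group over `ℤ/3ℤ`: 3×3 upper unitriangular matrices over the field
with 3 elements. -/
def Heis : Type :=
  {M : Matrix (Fin 3) (Fin 3) (ZMod 3) //
    M 0 0 = 1 ∧ M 1 1 = 1 ∧ M 2 2 = 1 ∧ M 1 0 = 0 ∧ M 2 0 = 0 ∧ M 2 1 = 0}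

namespace Heis

instance : Group Heis where
  mul A B := ⟨A.1 * B.1, by
    obtain ⟨a, ha⟩ := A; obtain ⟨b, hb⟩ := B
    obtain ⟨ha1, ha2, ha3, ha4, ha5, ha6⟩ := ha
    obtain ⟨hb1, hb2, hb3, hb4, hb5, hb6⟩ := hb
    refine ⟨?_, ?_, ?_, ?_, ?_, ?_⟩ <;>
      simp [Matrix.mul_apply, Fin.sum_univ_three, ha1, ha2, ha3, ha4, ha5, ha6,
        hb1, hb2, hb3, hb4, hb5, hb6]⟩
  one := ⟨1, by simp⟩
  inv A := ⟨!![1, -(A.1 0 1), A.1 0 1 * A.1 1 2 - A.1 0 2;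
               0, 1, -(A.1 1 2);
               0, 0, 1], by
    refine ⟨?_, ?_, ?_, ?_, ?_, ?_⟩ <;>
      simp [Matrix.vecHead, Matrix.vecTail]⟩
  mul_assoc A B C := Subtype.ext (Matrix.mul_assoc A.1 B.1 C.1)
  one_mul A := Subtype.ext (one_mul A.1)
  mul_one A := Subtype.ext (mul_one A.1)
  inv_mul_cancel A := by
    apply Subtype.ext
    obtain ⟨a, ha1, ha2, ha3, ha4, ha5, ha6⟩ := A
    show (!![1, -(a 0 1), a 0 1 * a 1 2 - a 0 2;
             0, 1, -(a 1 2); 0, 0, 1] * a) = 1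
    ext i j
    fin_cases i <;> fin_cases j <;>
      simp [Matrix.mul_apply, Fin.sum_univ_three, ha1, ha2, ha3, ha4, ha5, ha6,
        Matrix.one_apply] <;> ring

end Heis

/-- Relators of `⟨X₁,X₂,X₃ : Xᵢ³ = e, XᵢXⱼXₖ = XₖXᵢXⱼ (i,j,k pairwise distinct)⟩`. -/
def chshRels : Set (FreeGroup (Fin 3)) :=
  {r | (∃ i : Fin 3, r = (FreeGroup.of i) ^ 3) ∨
    (∃ i j k : Fin 3, i ≠ j ∧ j ≠ k ∧ i ≠ k ∧
      r = FreeGroup.of i * FreeGroup.of j * FreeGroup.of k *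
        (FreeGroup.of k * FreeGroup.of i * FreeGroup.of j)⁻¹)}


namespace Heis

def hmk (x y z : ZMod 3) : Heis :=
  ⟨!![1, x, z; 0, 1, y; 0, 0, 1], by
    refine ⟨?_, ?_, ?_, ?_, ?_, ?_⟩ <;> simp [Matrix.vecHead, Matrix.vecTail]⟩

lemma mul_val (A B : Heis) : (A * B).1 = A.1 * B.1 := rfl

lemma hmk_mul (x y z x' y' z' : ZMod 3) :
    hmk x y z * hmk x' y' z' = hmk (x + x') (y + y') (z + z' + x * y') := by
  apply Subtype.ext
  rw [mul_val]
  show (!![1, x, z; 0, 1, y; 0, 0, 1] * !![1, x', z'; 0, 1, y'; 0, 0, 1]) = _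
  ext i j
  fin_cases i <;> fin_cases j <;>
    (simp [hmk, Matrix.mul_apply, Fin.sum_univ_three, Matrix.vecHead, Matrix.vecTail]; try ring)

lemma hmk_one : hmk 0 0 0 = 1 := by
  apply Subtype.ext
  show (!![1, (0:ZMod 3), 0; 0, 1, 0; 0, 0, 1]) = (1 : Matrix (Fin 3) (Fin 3) (ZMod 3))
  ext i j
  fin_cases i <;> fin_cases j <;> simp [Matrix.one_apply, Matrix.vecHead, Matrix.vecTail]

lemma eq_hmk (A : Heis) : A = hmk (A.1 0 1) (A.1 1 2) (A.1 0 2) := by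
  apply Subtype.ext
  obtain ⟨a, h1, h2, h3, h4, h5, h6⟩ := A
  ext i j
  fin_cases i <;> fin_cases j <;>
    simp [hmk, h1, h2, h3, h4, h5, h6, Matrix.vecHead, Matrix.vecTail]

lemma hmk_inj {x y z x' y' z' : ZMod 3} (h : hmk x y z = hmk x' y' z') :
    x = x' ∧ y = y' ∧ z = z' := by
  have h01 := congrArg (fun A : Heis => A.1 0 1) h
  have h12 := congrArg (fun A : Heis => A.1 1 2) h
  have h02 := congrArg (fun A : Heis => A.1 0 2) h
  simp [hmk] at h01 h12 h02
  exact ⟨h01, h12, h02⟩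

end Heis

open Heis

abbrev Tgt := Multiplicative (ZMod 3) × Heis

def AA : Tgt := (1, hmk 1 0 0)
def BB : Tgt := (1, hmk 0 1 0)
def CC : Tgt := (Multiplicative.ofAdd 1, hmk (-1) (-1) 0)
def UU : Tgt := (1, hmk 0 0 1)

def fgen : Fin 3 → Tgt := ![AA, BB, CC]



lemma z3 : (3 : ZMod 3) = 0 := by decide

lemma tgt_cube_gen (t : Multiplicative (ZMod 3)) (x y z : ZMod 3) :
    ((t, hmk x y z) : Tgt) ^ 3 = 1 := by
  have h3 : ∀ s : Multiplicative (ZMod 3), s * s * s = 1 := by decide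
  show ((t, hmk x y z) : Tgt) ^ 3 = (1, (1:Heis))
  rw [pow_succ, pow_succ, pow_one, Prod.mk_mul_mk, Prod.mk_mul_mk, hmk_mul, hmk_mul, h3,
    ← hmk_one]
  have e1 : x + x + x = 0 := by linear_combination x * z3
  have e2 : y + y + y = 0 := by linear_combination y * z3
  have e3 : z + z + x * y + z + (x + x) * y = 0 := by linear_combination (z + x*y) * z3
  rw [e1, e2, e3]



lemma tgt_rel (i j k : Fin 3) (hij : i ≠ j) (hjk : j ≠ k) (hik : i ≠ k) :
    fgen i * fgen j * fgen k = fgen k * fgen i * fgen j := by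
  fin_cases i <;> fin_cases j <;> fin_cases k <;>
      first
        | exact (hij rfl).elim
        | exact (hjk rfl).elim
        | exact (hik rfl).elim
        | (refine Prod.ext (by decide) ?_
           show hmk _ _ _ * hmk _ _ _ * hmk _ _ _ = hmk _ _ _ * hmk _ _ _ * hmk _ _ _
           rw [hmk_mul, hmk_mul, hmk_mul, hmk_mul]
           congr 1 <;> decide)

lemma fgen_cube (i : Fin 3) : fgen i ^ 3 = 1 := by
  fin_cases i <;> exact tgt_cube_gen _ _ _ _

lemma rels_hold : ∀ r ∈ chshRels, FreeGroup.lift fgen r = 1 := by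
  rintro r (⟨i, rfl⟩ | ⟨i, j, k, hij, hjk, hik, rfl⟩)
  · rw [map_pow, FreeGroup.lift_apply_of]
    exact fgen_cube i
  · simp only [_root_.map_mul, _root_.map_inv, FreeGroup.lift_apply_of]
    rw [mul_inv_eq_one]
    exact tgt_rel i j k hij hjk hik

def φ : PresentedGroup chshRels →* Tgt := PresentedGroup.toGroup rels_hold

lemma φ_of (i : Fin 3) : φ (PresentedGroup.of (rels := chshRels) i) = fgen i :=
  PresentedGroup.toGroup.of rels_hold

abbrev Ga := PresentedGroup chshRels

def ga : Ga := PresentedGroup.of 0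
def gb : Ga := PresentedGroup.of 1
def gc : Ga := PresentedGroup.of 2

lemma rel_one {r : FreeGroup (Fin 3)} (hr : r ∈ chshRels) :
    PresentedGroup.mk chshRels r = 1 :=
  (QuotientGroup.eq_one_iff r).mpr (Subgroup.subset_normalClosure hr)

lemma cube (i : Fin 3) : (PresentedGroup.of (rels := chshRels) i) ^ 3 = 1 := by
  have := rel_one (Or.inl ⟨i, rfl⟩)
  rwa [map_pow] at this

lemma grel (i j k : Fin 3) (hij : i ≠ j) (hjk : j ≠ k) (hik : i ≠ k) :
    (PresentedGroup.of (rels := chshRels) i) * PresentedGroup.of j * PresentedGroup.of k =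
      PresentedGroup.of k * PresentedGroup.of i * PresentedGroup.of j := by
  have := rel_one (Or.inr ⟨i, j, k, hij, hjk, hik, rfl⟩)
  simp only [_root_.map_mul, _root_.map_inv] at this
  rw [mul_inv_eq_one] at this
  exact this

lemma r1 : ga * gb * gc = gc * ga * gb := grel 0 1 2 (by decide) (by decide) (by decide)
lemma r2 : gb * gc * ga = ga * gb * gc := grel 1 2 0 (by decide) (by decide) (by decide)
lemma r3 : gc * ga * gb = gb * gc * ga := grel 2 0 1 (by decide) (by decide) (by decide)
lemma r4 : ga * gc * gb = gb * ga * gc := grel 0 2 1 (by decide) (by decide) (by decide)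
lemma r5 : gc * gb * ga = ga * gc * gb := grel 2 1 0 (by decide) (by decide) (by decide)
lemma r6 : gb * ga * gc = gc * gb * ga := grel 1 0 2 (by decide) (by decide) (by decide)

def gu : Ga := ga * gb * ga⁻¹ * gb⁻¹

lemma gu_eq : gu = ga * gb * ga⁻¹ * gb⁻¹ := rfl

-- c commutes with a*b and b*a
lemma hc_ab : Commute gc (ga * gb) := by
  show gc * (ga * gb) = (ga * gb) * gc
  calc gc * (ga * gb) = gc * ga * gb := by group
    _ = ga * gb * gc := r1.symm
    _ = (ga * gb) * gc := by group

lemma hc_ba : Commute gc (gb * ga) := by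
  show gc * (gb * ga) = (gb * ga) * gc
  calc gc * (gb * ga) = gc * gb * ga := by group
    _ = gb * ga * gc := r6.symm
    _ = (gb * ga) * gc := by group

lemma ha_bc : Commute ga (gb * gc) := by
  show ga * (gb * gc) = (gb * gc) * ga
  calc ga * (gb * gc) = ga * gb * gc := by group
    _ = gb * gc * ga := r2.symm
    _ = (gb * gc) * ga := by group

lemma ha_cb : Commute ga (gc * gb) := by
  show ga * (gc * gb) = (gc * gb) * ga
  calc ga * (gc * gb) = ga * gc * gb := by group
    _ = gc * gb * ga := r5.symm
    _ = (gc * gb) * ga := by group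

lemma hb_ca : Commute gb (gc * ga) := by
  show gb * (gc * ga) = (gc * ga) * gb
  calc gb * (gc * ga) = gb * gc * ga := by group
    _ = gc * ga * gb := r3.symm
    _ = (gc * ga) * gb := by group

lemma hb_ac : Commute gb (ga * gc) := by
  show gb * (ga * gc) = (ga * gc) * gb
  calc gb * (ga * gc) = gb * ga * gc := by group
    _ = ga * gc * gb := r4.symm
    _ = (ga * gc) * gb := by group

lemma hcu : Commute gc gu := by
  have h := hc_ab.mul_right hc_ba.inv_right
  have e : gu = (ga * gb) * (gb * ga)⁻¹ := by rw [gu_eq]; group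
  rwa [← e] at h

lemma ha_v : Commute ga (gb * gc * gb⁻¹ * gc⁻¹) := by
  have h := ha_bc.mul_right ha_cb.inv_right
  have e : gb * gc * gb⁻¹ * gc⁻¹ = (gb * gc) * (gc * gb)⁻¹ := by group
  rwa [← e] at h

lemma hb_w : Commute gb (gc * ga * gc⁻¹ * ga⁻¹) := by
  have h := hb_ca.mul_right hb_ac.inv_right
  have e : gc * ga * gc⁻¹ * ga⁻¹ = (gc * ga) * (ga * gc)⁻¹ := by group
  rwa [← e] at h

-- conjugation identities
lemma st2 : gc⁻¹ * gb * gc = ga * gb * ga⁻¹ := by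
  calc gc⁻¹ * gb * gc = gc⁻¹ * (gb * gc * ga) * ga⁻¹ := by group
    _ = gc⁻¹ * (gc * ga * gb) * ga⁻¹ := by rw [← r3]
    _ = ga * gb * ga⁻¹ := by group

lemma st3 : ga⁻¹ * gc * ga = gb * gc * gb⁻¹ := by
  calc ga⁻¹ * gc * ga = ga⁻¹ * (gc * ga * gb) * gb⁻¹ := by group
    _ = ga⁻¹ * (ga * gb * gc) * gb⁻¹ := by rw [← r1]
    _ = gb * gc * gb⁻¹ := by group

lemma gu_eq' : gu = gc⁻¹ * gb * gc * gb⁻¹ := by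
  rw [gu_eq, ← st2]

-- [b,c] = u
lemma hbc : gb * gc * gb⁻¹ * gc⁻¹ = gu := by
  calc gb * gc * gb⁻¹ * gc⁻¹ = gc * (gc⁻¹ * gb * gc * gb⁻¹) * gc⁻¹ := by group
    _ = gc * gu * gc⁻¹ := by rw [← gu_eq']
    _ = gu * gc * gc⁻¹ := by rw [hcu.eq]
    _ = gu := by group

lemma hv_eq : gb * gc * gb⁻¹ * gc⁻¹ = ga⁻¹ * gc * ga * gc⁻¹ := by
  rw [← st3]

-- [c,a] = u
lemma hca' : gc * ga * gc⁻¹ * ga⁻¹ = gu := by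
  have key : gc * ga * gc⁻¹ * ga⁻¹ = gb * gc * gb⁻¹ * gc⁻¹ := by
    calc gc * ga * gc⁻¹ * ga⁻¹
        = ga * (ga⁻¹ * gc * ga * gc⁻¹) * ga⁻¹ := by group
      _ = ga * (gb * gc * gb⁻¹ * gc⁻¹) * ga⁻¹ := by rw [← hv_eq]
      _ = (gb * gc * gb⁻¹ * gc⁻¹) * ga * ga⁻¹ := by rw [ha_v.eq]
      _ = gb * gc * gb⁻¹ * gc⁻¹ := by group
  rw [key, hbc]

lemma hau : Commute ga gu := by
  have := ha_v
  rwa [show gb * gc * gb⁻¹ * gc⁻¹ = gu from hbc] at this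

lemma hbu : Commute gb gu := by
  have := hb_w
  rwa [show gc * ga * gc⁻¹ * ga⁻¹ = gu from hca'] at this

lemma conj_u (g : Ga) : ga * (gu * g) * ga⁻¹ = gu * (ga * g * ga⁻¹) := by
  calc ga * (gu * g) * ga⁻¹ = (ga * gu) * (g * ga⁻¹) := by group
    _ = (gu * ga) * (g * ga⁻¹) := by rw [hau.eq]
    _ = gu * (ga * g * ga⁻¹) := by group

lemma hu3 : gu ^ 3 = 1 := by
  have k1 : ga * gb * ga⁻¹ = gu * gb := by rw [gu_eq]; group
  have k2 : ga * (gu * gb) * ga⁻¹ = gu * (gu * gb) := by rw [conj_u, k1]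
  have k3 : ga * (gu * (gu * gb)) * ga⁻¹ = gu * (gu * (gu * gb)) := by
    rw [conj_u, k2]
  have key : gu * (gu * (gu * gb)) = (ga * ga * ga) * gb * (ga * ga * ga)⁻¹ := by
    rw [← k3, ← k2, ← k1]; group
  have ha3 : ga * ga * ga = 1 := by
    have := cube 0
    rw [pow_succ, pow_succ, pow_one] at this
    exact this
  rw [ha3] at key
  have : gu * (gu * (gu * gb)) = gb := by rw [key]; group
  have h2 : gu ^ 3 * gb = gb := by
    calc gu ^ 3 * gb = gu * (gu * (gu * gb)) := by
          rw [pow_succ, pow_succ, pow_one]; group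
      _ = gb := this
  calc gu ^ 3 = gu ^ 3 * gb * gb⁻¹ := by group
    _ = gb * gb⁻¹ := by rw [h2]
    _ = 1 := by group

lemma hu2 : gu ^ 2 = gu⁻¹ := by
  calc gu ^ 2 = gu⁻¹ * gu ^ 3 := by group
    _ = gu⁻¹ * 1 := by rw [hu3]
    _ = gu⁻¹ := mul_one _

lemma hab_u : Commute (ga * gb) gu := hau.mul_left hbu
lemma hbc_u : Commute (gb * gc) gu := hbu.mul_left hcu
lemma hac_u : Commute (ga * gc) gu := hau.mul_left hcu

lemma hba : gb * ga = ga * gb * gu ^ 2 := by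
  rw [hu2]
  calc gb * ga = gu⁻¹ * (ga * gb) := by rw [gu_eq]; group
    _ = (ga * gb) * gu⁻¹ := (hab_u.inv_right.eq).symm
    _ = ga * gb * gu⁻¹ := by group

lemma hcb : gc * gb = gb * gc * gu ^ 2 := by
  rw [hu2]
  calc gc * gb = (gb * gc * gb⁻¹ * gc⁻¹)⁻¹ * (gb * gc) := by group
    _ = gu⁻¹ * (gb * gc) := by rw [hbc]
    _ = (gb * gc) * gu⁻¹ := (hbc_u.inv_right.eq).symm
    _ = gb * gc * gu⁻¹ := by group

lemma hca : gc * ga = ga * gc * gu := by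
  calc gc * ga = (gc * ga * gc⁻¹ * ga⁻¹) * (ga * gc) := by group
    _ = gu * (ga * gc) := by rw [hca']
    _ = (ga * gc) * gu := (hac_u.eq).symm
    _ = ga * gc * gu := by group

lemma hb_an (n : ℕ) : gb * ga ^ n = ga ^ n * gb * gu ^ (2 * n) := by
  induction n with
  | zero => simp
  | succ n ih =>
    calc gb * ga ^ (n + 1) = (gb * ga ^ n) * ga := by rw [pow_succ]; group
      _ = ga ^ n * gb * gu ^ (2 * n) * ga := by rw [ih]
      _ = ga ^ n * gb * ga * gu ^ (2 * n) := by
          rw [mul_assoc (ga ^ n * gb), (hau.symm.pow_left (2 * n)).eq, ← mul_assoc]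
      _ = ga ^ n * (ga * gb * gu ^ 2) * gu ^ (2 * n) := by rw [mul_assoc (ga ^ n), ← hba]
      _ = (ga ^ n * ga) * gb * (gu ^ 2 * gu ^ (2 * n)) := by group
      _ = ga ^ (n + 1) * gb * gu ^ (2 + 2 * n) := by rw [← pow_succ, ← pow_add]
      _ = ga ^ (n + 1) * gb * gu ^ (2 * (n + 1)) := by ring_nf

lemma hc_an (n : ℕ) : gc * ga ^ n = ga ^ n * gc * gu ^ n := by
  induction n with
  | zero => simp
  | succ n ih =>
    calc gc * ga ^ (n + 1) = (gc * ga ^ n) * ga := by rw [pow_succ]; group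
      _ = ga ^ n * gc * gu ^ n * ga := by rw [ih]
      _ = ga ^ n * gc * ga * gu ^ n := by
          rw [mul_assoc (ga ^ n * gc), (hau.symm.pow_left n).eq, ← mul_assoc]
      _ = ga ^ n * (ga * gc * gu) * gu ^ n := by rw [mul_assoc (ga ^ n), ← hca]
      _ = (ga ^ n * ga) * gc * (gu * gu ^ n) := by group
      _ = ga ^ (n + 1) * gc * gu ^ (n + 1) := by rw [← pow_succ, ← pow_succ']

lemma hc_bn (n : ℕ) : gc * gb ^ n = gb ^ n * gc * gu ^ (2 * n) := by
  induction n with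
  | zero => simp
  | succ n ih =>
    calc gc * gb ^ (n + 1) = (gc * gb ^ n) * gb := by rw [pow_succ]; group
      _ = gb ^ n * gc * gu ^ (2 * n) * gb := by rw [ih]
      _ = gb ^ n * gc * gb * gu ^ (2 * n) := by
          rw [mul_assoc (gb ^ n * gc), (hbu.symm.pow_left (2 * n)).eq, ← mul_assoc]
      _ = gb ^ n * (gb * gc * gu ^ 2) * gu ^ (2 * n) := by rw [mul_assoc (gb ^ n), ← hcb]
      _ = (gb ^ n * gb) * gc * (gu ^ 2 * gu ^ (2 * n)) := by group
      _ = gb ^ (n + 1) * gc * gu ^ (2 + 2 * n) := by rw [← pow_succ, ← pow_add]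
      _ = gb ^ (n + 1) * gc * gu ^ (2 * (n + 1)) := by ring_nf

def NF (i j k l : ℕ) : Ga := ga ^ i * gb ^ j * gc ^ k * gu ^ l

lemma mulA (i j k l : ℕ) : ga * NF i j k l = NF (i + 1) j k l := by
  unfold NF
  rw [pow_succ']
  group

lemma mulU (i j k l : ℕ) : gu * NF i j k l = NF i j k (l + 1) := by
  unfold NF
  rw [pow_succ']
  calc gu * (ga ^ i * gb ^ j * gc ^ k * gu ^ l)
      = (gu * ga ^ i) * gb ^ j * gc ^ k * gu ^ l := by group
    _ = (ga ^ i * gu) * gb ^ j * gc ^ k * gu ^ l := by rw [(hau.symm.pow_right i).eq]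
    _ = ga ^ i * (gu * gb ^ j) * gc ^ k * gu ^ l := by group
    _ = ga ^ i * (gb ^ j * gu) * gc ^ k * gu ^ l := by rw [(hbu.symm.pow_right j).eq]
    _ = ga ^ i * gb ^ j * (gu * gc ^ k) * gu ^ l := by group
    _ = ga ^ i * gb ^ j * (gc ^ k * gu) * gu ^ l := by rw [(hcu.symm.pow_right k).eq]
    _ = ga ^ i * gb ^ j * gc ^ k * (gu * gu ^ l) := by group

lemma mulB (i j k l : ℕ) : gb * NF i j k l = NF i (j + 1) k (2 * i + l) := by
  unfold NF
  calc gb * (ga ^ i * gb ^ j * gc ^ k * gu ^ l)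
      = (gb * ga ^ i) * gb ^ j * gc ^ k * gu ^ l := by group
    _ = ga ^ i * gb * gu ^ (2 * i) * gb ^ j * gc ^ k * gu ^ l := by rw [hb_an]
    _ = ga ^ i * gb * gb ^ j * gu ^ (2 * i) * gc ^ k * gu ^ l := by
        rw [mul_assoc (ga ^ i * gb), ((hbu.symm.pow_left (2*i)).pow_right j).eq, ← mul_assoc]
    _ = ga ^ i * gb * gb ^ j * gc ^ k * gu ^ (2 * i) * gu ^ l := by
        rw [mul_assoc (ga ^ i * gb * gb ^ j), ((hcu.symm.pow_left (2*i)).pow_right k).eq,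
          ← mul_assoc]
    _ = ga ^ i * gb ^ (j + 1) * gc ^ k * gu ^ (2 * i + l) := by
        rw [pow_succ', pow_add]
        group

lemma mulC (i j k l : ℕ) : gc * NF i j k l = NF i j (k + 1) (i + 2 * j + l) := by
  unfold NF
  calc gc * (ga ^ i * gb ^ j * gc ^ k * gu ^ l)
      = (gc * ga ^ i) * gb ^ j * gc ^ k * gu ^ l := by group
    _ = ga ^ i * gc * gu ^ i * gb ^ j * gc ^ k * gu ^ l := by rw [hc_an]
    _ = ga ^ i * ((gc * gb ^ j) * gu ^ i) * gc ^ k * gu ^ l := by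
        rw [mul_assoc (ga ^ i * gc), ((hbu.symm.pow_left i).pow_right j).eq]
        group
    _ = ga ^ i * ((gb ^ j * gc * gu ^ (2 * j)) * gu ^ i) * gc ^ k * gu ^ l := by rw [hc_bn]
    _ = ga ^ i * gb ^ j * gc * ((gu ^ (2 * j) * gu ^ i) * gc ^ k) * gu ^ l := by group
    _ = ga ^ i * gb ^ j * gc * (gu ^ (2 * j + i) * gc ^ k) * gu ^ l := by rw [← pow_add]
    _ = ga ^ i * gb ^ j * gc * (gc ^ k * gu ^ (2 * j + i)) * gu ^ l := by
        rw [((hcu.symm.pow_left (2 * j + i)).pow_right k).eq]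
    _ = ga ^ i * gb ^ j * (gc * gc ^ k) * (gu ^ (2 * j + i) * gu ^ l) := by group
    _ = ga ^ i * gb ^ j * gc ^ (k + 1) * gu ^ (2 * j + i + l) := by
        rw [← pow_succ', ← pow_add]
    _ = ga ^ i * gb ^ j * gc ^ (k + 1) * gu ^ (i + 2 * j + l) := by ring_nf

def isNF (g : Ga) : Prop := ∃ i j k l : ℕ, g = NF i j k l

lemma NF_one : NF 0 0 0 0 = 1 := by unfold NF; simp

def goodSet : Subgroup Ga where
  carrier := {g | (∀ h, isNF h → isNF (g * h)) ∧ (∀ h, isNF h → isNF (g⁻¹ * h))}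
  one_mem' := by
    constructor <;> intro h hh <;> simpa using hh
  mul_mem' := by
    rintro x y ⟨hx, hx'⟩ ⟨hy, hy'⟩
    constructor
    · intro h hh
      have e : (x * y) * h = x * (y * h) := by group
      rw [e]
      exact hx _ (hy _ hh)
    · intro h hh
      have e : (x * y)⁻¹ * h = y⁻¹ * (x⁻¹ * h) := by group
      rw [e]
      exact hy' _ (hx' _ hh)

  inv_mem' := by
    rintro x ⟨hx, hx'⟩
    refine ⟨hx', ?_⟩
    simpa using hx


lemma cube_mul (i : Fin 3) :
    PresentedGroup.of (rels := chshRels) i * (PresentedGroup.of i * PresentedGroup.of i) = 1 := by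
  have := cube i
  rw [pow_succ, pow_succ, pow_one] at this
  rw [← mul_assoc]
  exact this

lemma inv_gen (i : Fin 3) :
    (PresentedGroup.of (rels := chshRels) i)⁻¹ = PresentedGroup.of i * PresentedGroup.of i :=
  inv_eq_of_mul_eq_one_right (cube_mul i)

lemma gen_left (i : Fin 3) : ∀ h, isNF h → isNF (PresentedGroup.of (rels := chshRels) i * h) := by
  rintro h ⟨p, q, r, s, rfl⟩
  fin_cases i
  · exact ⟨_, _, _, _, show ga * NF p q r s = _ from mulA p q r s⟩
  · exact ⟨_, _, _, _, show gb * NF p q r s = _ from mulB p q r s⟩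
  · exact ⟨_, _, _, _, show gc * NF p q r s = _ from mulC p q r s⟩

lemma gen_mem (i : Fin 3) : PresentedGroup.of (rels := chshRels) i ∈ goodSet := by
  refine ⟨gen_left i, ?_⟩
  intro h hh
  rw [inv_gen i, mul_assoc]
  exact gen_left i _ (gen_left i _ hh)

lemma all_NF (g : Ga) : isNF g := by
  have hg : g ∈ goodSet := PresentedGroup.generated_by chshRels goodSet gen_mem g
  have := hg.1 1 ⟨0, 0, 0, 0, NF_one.symm⟩
  simpa using this

lemma φ_a : φ ga = AA := by rw [ga, φ_of]; rfl
lemma φ_b : φ gb = BB := by rw [gb, φ_of]; rfl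
lemma φ_c : φ gc = CC := by rw [gc, φ_of]; rfl

lemma UU_aux : UU * (BB * AA) = AA * BB := by
  show ((1 : Multiplicative (ZMod 3)), hmk 0 0 1) * ((1, hmk 0 1 0) * (1, hmk 1 0 0)) =
    ((1 : Multiplicative (ZMod 3)), hmk 1 0 0) * (1, hmk 0 1 0)
  rw [Prod.mk_mul_mk, Prod.mk_mul_mk, Prod.mk_mul_mk, hmk_mul, hmk_mul, hmk_mul]
  refine Prod.ext (by decide) ?_
  congr 1 <;> decide

lemma φ_u : φ gu = UU := by
  have h1 : φ gu * (BB * AA) = AA * BB := by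
    rw [gu_eq]
    simp only [_root_.map_mul, _root_.map_inv, φ_a, φ_b]
    group
  exact mul_right_cancel (h1.trans UU_aux.symm)

lemma powA (n : ℕ) : AA ^ n = ((1 : Multiplicative (ZMod 3)), hmk (n : ZMod 3) 0 0) := by
  induction n with
  | zero => rw [pow_zero]; rw [show ((0:ℕ) : ZMod 3) = 0 by push_cast; rfl, hmk_one]; rfl
  | succ n ih =>
    rw [pow_succ, ih]
    show ((1 : Multiplicative (ZMod 3)), hmk (n : ZMod 3) 0 0) * (1, hmk 1 0 0) = _
    rw [Prod.mk_mul_mk, hmk_mul, one_mul]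
    have e2 : ((n : ZMod 3)) + 1 = ((n + 1 : ℕ) : ZMod 3) := by push_cast; ring
    rw [e2]
    norm_num

lemma powB (n : ℕ) : BB ^ n = ((1 : Multiplicative (ZMod 3)), hmk 0 (n : ZMod 3) 0) := by
  induction n with
  | zero => rw [pow_zero]; rw [show ((0:ℕ) : ZMod 3) = 0 by push_cast; rfl, hmk_one]; rfl
  | succ n ih =>
    rw [pow_succ, ih]
    show ((1 : Multiplicative (ZMod 3)), hmk 0 (n : ZMod 3) 0) * (1, hmk 0 1 0) = _
    rw [Prod.mk_mul_mk, hmk_mul, one_mul]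
    have e2 : ((n : ZMod 3)) + 1 = ((n + 1 : ℕ) : ZMod 3) := by push_cast; ring
    rw [e2]
    norm_num

lemma powU (n : ℕ) : UU ^ n = ((1 : Multiplicative (ZMod 3)), hmk 0 0 (n : ZMod 3)) := by
  induction n with
  | zero => rw [pow_zero]; rw [show ((0:ℕ) : ZMod 3) = 0 by push_cast; rfl, hmk_one]; rfl
  | succ n ih =>
    rw [pow_succ, ih]
    show ((1 : Multiplicative (ZMod 3)), hmk 0 0 (n : ZMod 3)) * (1, hmk 0 0 1) = _
    rw [Prod.mk_mul_mk, hmk_mul, one_mul]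
    have e2 : ((n : ZMod 3)) + 1 + 0 * 0 = ((n + 1 : ℕ) : ZMod 3) := by push_cast; ring
    rw [e2]
    norm_num

lemma φ_NF (i j k l : ℕ) : φ (NF i j k l) = AA ^ i * BB ^ j * CC ^ k * UU ^ l := by
  unfold NF
  simp only [_root_.map_mul, map_pow, φ_a, φ_b, φ_c, φ_u]

lemma CC_fst_pow (k : ℕ) : (CC ^ k).1 = Multiplicative.ofAdd (k : ZMod 3) := by
  induction k with
  | zero => rw [pow_zero]; push_cast; rfl
  | succ k ih =>
    rw [pow_succ, Prod.fst_mul, ih]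
    show _ * Multiplicative.ofAdd 1 = _
    rw [← ofAdd_add]
    push_cast
    rfl

lemma CC3 : CC ^ 3 = 1 := tgt_cube_gen _ _ _ _

lemma φ_inj : Function.Injective φ := by
  rw [injective_iff_map_eq_one]
  intro g hg
  obtain ⟨i, j, k, l, rfl⟩ := all_NF g
  rw [φ_NF] at hg
  -- first component gives 3 ∣ k
  have hfst := congrArg Prod.fst hg
  rw [Prod.fst_mul, Prod.fst_mul, Prod.fst_mul, CC_fst_pow, powA, powB, powU] at hfst
  have hk0 : ((k : ZMod 3)) = 0 := by
    have : Multiplicative.ofAdd ((k : ZMod 3)) = 1 := by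
      simpa using hfst
    have := congrArg Multiplicative.toAdd this
    simpa using this
  have hk : 3 ∣ k := (ZMod.natCast_eq_zero_iff k 3).mp hk0
  obtain ⟨k', rfl⟩ := hk
  rw [pow_mul, CC3, one_pow, mul_one] at hg
  rw [powA, powB, powU, Prod.mk_mul_mk, Prod.mk_mul_mk, hmk_mul, hmk_mul] at hg
  have hsnd := congrArg Prod.snd hg
  have h1 : (1 : Tgt).2 = hmk 0 0 0 := hmk_one.symm
  rw [h1] at hsnd
  obtain ⟨hi, hj, hz⟩ := hmk_inj hsnd
  simp only [add_zero, zero_add, mul_zero] at hi hj hz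
  have hi3 : 3 ∣ i := (ZMod.natCast_eq_zero_iff i 3).mp hi
  have hj3 : 3 ∣ j := (ZMod.natCast_eq_zero_iff j 3).mp hj
  have hl0 : ((l : ZMod 3)) = 0 := by
    rw [hi] at hz
    simpa using hz
  have hl3 : 3 ∣ l := (ZMod.natCast_eq_zero_iff l 3).mp hl0
  obtain ⟨i', rfl⟩ := hi3
  obtain ⟨j', rfl⟩ := hj3
  obtain ⟨l', rfl⟩ := hl3
  unfold NF
  have hga3 : ga ^ 3 = 1 := cube 0
  have hgb3 : gb ^ 3 = 1 := cube 1
  have hgc3 : gc ^ 3 = 1 := cube 2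
  rw [pow_mul, pow_mul, pow_mul, pow_mul, hga3, hgb3, hgc3, hu3]
  simp

lemma castv (v : ZMod 3) : ((v.val : ℕ) : ZMod 3) = v := ZMod.natCast_rightInverse v

lemma φ_surj : Function.Surjective φ := by
  rintro ⟨t, m⟩
  have hm := eq_hmk m
  set x := m.1 0 1
  set y := m.1 1 2
  set z := m.1 0 2
  set k := (Multiplicative.toAdd t).val with hkdef
  have hkt : ((k : ℕ) : ZMod 3) = Multiplicative.toAdd t := castv _
  have hk3 : k < 3 := ZMod.val_lt _
  have hcases : k = 0 ∨ k = 1 ∨ k = 2 := by omega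
  rcases hcases with h | h | h
  · -- k = 0
    refine ⟨NF x.val y.val 0 ((z - x * y).val), ?_⟩
    rw [φ_NF, powA, powB, powU, pow_zero, castv, castv, castv, mul_one,
      Prod.mk_mul_mk, Prod.mk_mul_mk, hmk_mul, hmk_mul]
    have ht : Multiplicative.toAdd t = 0 := by rw [← hkt, h]; decide
    refine Prod.ext ?_ ?_
    · show (1 : Multiplicative (ZMod 3)) * 1 * 1 = t
      rw [← ofAdd_toAdd t, ht]
      decide
    · rw [hm]
      show hmk _ _ _ = hmk x y z
      congr 1 <;> ring
  · -- k = 1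
    refine ⟨NF (x + 1).val (y + 1).val 1 ((z - ((x+1)*(y+1) - (x+1))).val), ?_⟩
    rw [φ_NF, powA, powB, powU, pow_one, castv, castv, castv]
    have ht : Multiplicative.toAdd t = 1 := by rw [← hkt, h]; decide
    show (_ * _) * ((Multiplicative.ofAdd (1 : ZMod 3), hmk (-1) (-1) 0)) * _ = _
    rw [Prod.mk_mul_mk, Prod.mk_mul_mk, Prod.mk_mul_mk, hmk_mul, hmk_mul, hmk_mul]
    refine Prod.ext ?_ ?_
    · show (1 : Multiplicative (ZMod 3)) * 1 * Multiplicative.ofAdd 1 * 1 = t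
      rw [← ofAdd_toAdd t, ht]
      decide
    · rw [hm]
      show hmk _ _ _ = hmk x y z
      congr 1 <;> ring
  · -- k = 2
    refine ⟨NF (x + 2).val (y + 2).val 2 ((z - ((x+2)*(y+2) - 2*(x+2) + 1)).val), ?_⟩
    rw [φ_NF, powA, powB, powU, castv, castv, castv]
    have ht : Multiplicative.toAdd t = 2 := by rw [← hkt, h]; decide
    rw [pow_succ, pow_one]
    show (_ * _) * ((Multiplicative.ofAdd (1 : ZMod 3), hmk (-1) (-1) 0) *
      (Multiplicative.ofAdd (1 : ZMod 3), hmk (-1) (-1) 0)) * _ = _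
    rw [Prod.mk_mul_mk, Prod.mk_mul_mk, Prod.mk_mul_mk, Prod.mk_mul_mk,
      hmk_mul, hmk_mul, hmk_mul, hmk_mul]
    refine Prod.ext ?_ ?_
    · show (1 : Multiplicative (ZMod 3)) * 1 *
        (Multiplicative.ofAdd 1 * Multiplicative.ofAdd 1) * 1 = t
      rw [← ofAdd_toAdd t, ht]
      decide
    · rw [hm]
      show hmk _ _ _ = hmk x y z
      congr 1 <;> ring


/-- The group `⟨X₁,X₂,X₃ : Xᵢ³ = e, XᵢXⱼXₖ = XₖXᵢXⱼ⟩` is isomorphic to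
`C₃ × ((C₃ × C₃) ⋊ C₃)`, the latter factor being the Heisenberg group over `ℤ/3ℤ`. -/
theorem chsh_group_iso_heisenberg :
    Nonempty (PresentedGroup chshRels ≃* Multiplicative (ZMod 3) × Heis) := by
  exact ⟨MulEquiv.ofBijective φ ⟨φ_inj, φ_surj⟩⟩
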